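/- A coalgebra endomorphism G of the reduced tensor coalgebra T V whose first component g_1: V → V is an isomorphism is itself an isomorphism. -/

import Mathlib

open scoped TensorProduct DirectSum

noncomputable section

/-- `n`-th tensor power of `V` over `ℂ`. -/
abbrev Tpow (V : Type) [AddCommGroup V] [Module ℂ V] (n : ℕ) : Type :=
  ⨂[ℂ] _ : Fin n, V

/-- The underlying space `⊕_{n ≥ 1} V^{⊗n}` of the reduced tensor coalgebra
(the summand of index `n` is `V^{⊗(n+1)}`). -/
abbrev TCo (V : Type) [AddCommGroup V] [Module ℂ V] : Type :=
  ⨁ n : ℕ, Tpow V (n + 1)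

variable {V W : Type} [AddCommGroup V] [Module ℂ V] [AddCommGroup W] [Module ℂ W]

/-- Cast between tensor powers of equal exponents. -/
def castT {m n : ℕ} (h : m = n) : Tpow V m ≃ₗ[ℂ] Tpow V n :=
  PiTensorProduct.reindex ℂ (fun _ => V) (finCongr h)

/-- Splitting `V^{⊗(i+1)+(j+1)} ≅ V^{⊗(i+1)} ⊗ V^{⊗(j+1)}`. -/
def splitT (i j : ℕ) :
    Tpow V ((i + 1) + (j + 1)) ≃ₗ[ℂ] Tpow V (i + 1) ⊗[ℂ] Tpow V (j + 1) :=
  (PiTensorProduct.reindex ℂ (fun _ => V) finSumFinEquiv.symm).trans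
    (PiTensorProduct.tmulEquiv ℂ V).symm

/-- Inclusion of the `n`-indexed summand `V^{⊗(n+1)} → T V`. -/
def inclT (V : Type) [AddCommGroup V] [Module ℂ V] (n : ℕ) :
    Tpow V (n + 1) →ₗ[ℂ] TCo V :=
  DirectSum.lof ℂ ℕ (fun m => Tpow V (m + 1)) n

/-- The deconcatenation coproduct on the reduced tensor coalgebra. -/
def Δ (V : Type) [AddCommGroup V] [Module ℂ V] : TCo V →ₗ[ℂ] TCo V ⊗[ℂ] TCo V :=
  DirectSum.toModule ℂ ℕ (TCo V ⊗[ℂ] TCo V) fun n =>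
    ∑ i : Fin n,
      (TensorProduct.map (inclT V i) (inclT V (n - 1 - i))).comp
        ((splitT (i : ℕ) (n - 1 - i)).toLinearMap.comp
          (castT (show n + 1 = ((i : ℕ) + 1) + ((n - 1 - (i : ℕ)) + 1) by
            have := i.isLt; omega)).toLinearMap)

/-- The projection `π₁ : T V → V` onto the first tensor component. -/
def pr (V : Type) [AddCommGroup V] [Module ℂ V] : TCo V →ₗ[ℂ] V :=
  DirectSum.toModule ℂ ℕ V fun n =>
    match n with
    | 0 => (PiTensorProduct.subsingletonEquiv (0 : Fin 1)).toLinearMap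
    | _ + 1 => 0

/-- The inclusion `V → T V` as the first tensor component. -/
def inclV (V : Type) [AddCommGroup V] [Module ℂ V] : V →ₗ[ℂ] TCo V :=
  (inclT V 0).comp (PiTensorProduct.subsingletonEquiv (R := ℂ) (s := fun _ : Fin 1 => V) (0 : Fin 1)).symm.toLinearMap

/-- A linear map `T V → T W` is a coalgebra morphism when it commutes with
the deconcatenation coproducts. -/
def IsCoalgMap (F : TCo V →ₗ[ℂ] TCo W) : Prop :=
  (Δ W).comp F = (TensorProduct.map F F).comp (Δ V)

/-- A linear map `T V → T V` is a coderivation when it satisfies the co-Leibniz rule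
`Δ ∘ B = (B ⊗ id + id ⊗ B) ∘ Δ`. -/
def IsCoder (B : TCo V →ₗ[ℂ] TCo V) : Prop :=
  (Δ V).comp B =
    (TensorProduct.map B LinearMap.id + TensorProduct.map LinearMap.id B).comp (Δ V)

/-- `F : T V → T W` is the coalgebra lift of the linear map `f : V → W`:
it is a coalgebra morphism whose projection to `W` is `f` on `V` and `0` on `V^{⊗n}`, `n ≥ 2`. -/
def IsCoalgLift (f : V →ₗ[ℂ] W) (F : TCo V →ₗ[ℂ] TCo W) : Prop :=
  IsCoalgMap F ∧ (pr W).comp (F.comp (inclV V)) = f ∧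
    ∀ n : ℕ, n ≠ 0 → (pr W).comp (F.comp (inclT V n)) = 0

/-- `A : T V → T V` is the coderivation lift of the bilinear map `a : V ⊗ V → V`:
it is a coderivation whose projection to `V` is `a` on `V^{⊗2}` and `0` on the
other tensor powers. -/
def IsCoderLift (a : V →ₗ[ℂ] V →ₗ[ℂ] V) (A : TCo V →ₗ[ℂ] TCo V) : Prop :=
  IsCoder A ∧
    (∀ X : Fin 2 → V,
      pr V (A (inclT V 1 (PiTensorProduct.tprod ℂ X))) = a (X 0) (X 1)) ∧
    ∀ n : ℕ, n ≠ 1 → (pr V).comp (A.comp (inclT V n)) = 0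

/-- The exponential `exp(A) = Σ_k A^k / k!` of a tensor-degree-lowering map `A` on `T V`
(on the summand `V^{⊗(n+1)}` the series truncates at `k = n`). -/
def expT (A : TCo V →ₗ[ℂ] TCo V) : TCo V →ₗ[ℂ] TCo V :=
  DirectSum.toModule ℂ ℕ (TCo V) fun n =>
    (∑ k ∈ Finset.range (n + 1), ((k.factorial : ℂ)⁻¹) • (A ^ k)).comp (inclT V n)

/-- Left-associated product of a nonempty list (junk value `0` on the empty list). -/
def listProd (mul : V →ₗ[ℂ] V →ₗ[ℂ] V) : List V → V
  | [] => 0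
  | x :: xs => xs.foldl (fun u v => mul u v) x

/-- The `n`-fold product `X 0 · X 1 ⋯ X (n-1)`. -/
def prodF (mul : V →ₗ[ℂ] V →ₗ[ℂ] V) {n : ℕ} (X : Fin n → V) : V :=
  listProd mul (List.ofFn X)


/-!
Write `F_{m,n} := blockT F m n : V^{⊗(n+1)} → W^{⊗(m+1)}` for the blocks of `F`. Projecting
`Δ ∘ F = (F ⊗ F) ∘ Δ` onto `W^{⊗(i+1)} ⊗ W^{⊗(j+1)}` gives, up to the splitting isomorphisms,
`F_{i+j+1,n} = Σ_{a+b=n-1} F_{i,a} ⊗ F_{j,b}`. Induction on `n` then shows that `F_{m,n} = 0` for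
`m > n` and that `F_{n+1,n+1} ≅ F_{0,0} ⊗ F_{n,n}`, so every diagonal block is a tensor power of
`g₁ = F_{0,0}`. A block triangular map of `ℕ`-graded direct sums with bijective diagonal blocks is
bijective, by solving degree by degree.
-/

namespace DirectSum

variable {R : Type*} [Ring R] {M N : ℕ → Type*} [∀ n, AddCommGroup (M n)] [∀ n, Module R (M n)]
  [∀ n, AddCommGroup (N n)] [∀ n, Module R (N n)] {F : (⨁ n, M n) →ₗ[R] ⨁ n, N n}

theorem injective_of_upperTriangular
    (hF : ∀ m n, n < m → component R ℕ N m ∘ₗ F ∘ₗ lof R ℕ M n = 0)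
    (hdiag : ∀ n, Function.Injective (component R ℕ N n ∘ₗ F ∘ₗ lof R ℕ M n)) :
    Function.Injective F := by
  classical
  refine (injective_iff_map_eq_zero F).mpr fun x hx => ?_
  by_contra hne
  have hsupp : x.support.Nonempty :=
    Finset.nonempty_iff_ne_empty.mpr fun h => hne (DFinsupp.support_eq_empty.mp h)
  set n := x.support.max' hsupp
  have hmem : n ∈ x.support := x.support.max'_mem hsupp
  have hxn : (component R ℕ N n ∘ₗ F ∘ₗ lof R ℕ M n) (x n) = 0 := by
    have h0 : component R ℕ N n (F x) = 0 := by rw [hx, map_zero]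
    rw [← sum_support_of x, map_sum, map_sum, Finset.sum_eq_single_of_mem n hmem] at h0
    · exact h0
    · exact fun k hk hkn =>
        LinearMap.congr_fun (hF n k ((x.support.le_max' k hk).lt_of_ne hkn)) (x k)
  exact DFinsupp.mem_support_iff.mp hmem (hdiag n (hxn.trans (map_zero _).symm))

theorem surjective_of_upperTriangular
    (hF : ∀ m n, n < m → component R ℕ N m ∘ₗ F ∘ₗ lof R ℕ M n = 0)
    (hdiag : ∀ n, Function.Surjective (component R ℕ N n ∘ₗ F ∘ₗ lof R ℕ M n)) :
    Function.Surjective F := by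
  classical
  suffices hlof : ∀ n (z : N n), lof R ℕ N n z ∈ LinearMap.range F by
    intro t
    rw [← sum_support_of t]
    exact Submodule.sum_mem _ fun m _ => hlof m (t m)
  intro n
  induction n using Nat.strong_induction_on with
  | _ n ih =>
    intro z
    obtain ⟨w, hw⟩ := hdiag n z
    set y := F (lof R ℕ M n w) - lof R ℕ N n z
    have hy : ∀ m, n ≤ m → component R ℕ N m y = 0 := by
      intro m hm
      rcases hm.eq_or_lt with rfl | hlt
      · rw [map_sub, component.lof_self]
        exact sub_eq_zero.mpr hw
      · rw [map_sub, component.of, dif_neg hlt.ne, sub_zero]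
        exact LinearMap.congr_fun (hF m n hlt) w
    have hy_mem : y ∈ LinearMap.range F := by
      rw [← sum_support_of y]
      exact Submodule.sum_mem _ fun m hm =>
        ih m (not_le.mp fun h => DFinsupp.mem_support_iff.mp hm (hy m h)) (y m)
    obtain ⟨u, hu⟩ := hy_mem
    exact ⟨lof R ℕ M n w - u, by rw [map_sub, hu, sub_sub_cancel]⟩

theorem bijective_of_upperTriangular
    (hF : ∀ m n, n < m → component R ℕ N m ∘ₗ F ∘ₗ lof R ℕ M n = 0)
    (hdiag : ∀ n, Function.Bijective (component R ℕ N n ∘ₗ F ∘ₗ lof R ℕ M n)) :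
    Function.Bijective F :=
  ⟨injective_of_upperTriangular hF fun n => (hdiag n).1,
    surjective_of_upperTriangular hF fun n => (hdiag n).2⟩

end DirectSum

abbrev projT (V : Type) [AddCommGroup V] [Module ℂ V] (n : ℕ) : TCo V →ₗ[ℂ] Tpow V (n + 1) :=
  DirectSum.component ℂ ℕ (fun m => Tpow V (m + 1)) n

abbrev blockT (F : TCo V →ₗ[ℂ] TCo W) (m n : ℕ) : Tpow V (n + 1) →ₗ[ℂ] Tpow W (m + 1) :=
  projT W m ∘ₗ F ∘ₗ inclT V n

theorem projT_comp_inclT_self (n : ℕ) : projT V n ∘ₗ inclT V n = LinearMap.id :=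
  LinearMap.ext fun x => DirectSum.component.lof_self (R := ℂ) (M := fun m => Tpow V (m + 1)) n x

theorem projT_comp_inclT_of_ne {m n : ℕ} (h : n ≠ m) : projT V m ∘ₗ inclT V n = 0 :=
  LinearMap.ext fun _ => by
    rw [inclT, LinearMap.comp_apply, DirectSum.component.of]
    exact dif_neg h

@[simp]
theorem castT_self {n : ℕ} (h : n = n) : castT (V := V) h = LinearEquiv.refl ℂ _ := by
  simp [castT, finCongr_refl, PiTensorProduct.reindex_refl]

theorem castT_castT {a b c : ℕ} (h₁ : a = b) (h₂ : b = c) (x : Tpow V a) :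
    castT h₂ (castT h₁ x) = castT (h₁.trans h₂) x := by
  subst h₁ h₂
  simp

theorem map_castT_splitT {i j k l : ℕ} (hi : i + 1 = k + 1) (hj : j + 1 = l + 1)
    (x : Tpow V ((i + 1) + (j + 1))) :
    TensorProduct.map (castT hi).toLinearMap (castT hj).toLinearMap (splitT i j x)
      = splitT k l (castT (by omega) x) := by
  obtain rfl : i = k := by omega
  obtain rfl : j = l := by omega
  simp [TensorProduct.map_id]

theorem map_projT_map_inclT_of_eq {i j a b : ℕ} (ha : a + 1 = i + 1) (hb : b + 1 = j + 1)
    (t : Tpow V (a + 1) ⊗[ℂ] Tpow V (b + 1)) :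
    TensorProduct.map (projT V i) (projT V j) (TensorProduct.map (inclT V a) (inclT V b) t) =
      TensorProduct.map (castT ha).toLinearMap (castT hb).toLinearMap t := by
  obtain rfl : a = i := by omega
  obtain rfl : b = j := by omega
  rw [← LinearMap.comp_apply, ← TensorProduct.map_comp, projT_comp_inclT_self,
    projT_comp_inclT_self]
  simp [TensorProduct.map_id]

theorem map_projT_map_inclT_of_ne {i j a b : ℕ} (h : a ≠ i ∨ b ≠ j)
    (t : Tpow V (a + 1) ⊗[ℂ] Tpow V (b + 1)) :
    TensorProduct.map (projT V i) (projT V j) (TensorProduct.map (inclT V a) (inclT V b) t) =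
      0 := by
  rw [← LinearMap.comp_apply, ← TensorProduct.map_comp]
  rcases h with h | h
  · rw [projT_comp_inclT_of_ne h, TensorProduct.map_zero_left, LinearMap.zero_apply]
  · rw [projT_comp_inclT_of_ne h, TensorProduct.map_zero_right, LinearMap.zero_apply]

theorem Δ_inclT (n : ℕ) (x : Tpow V (n + 1)) :
    Δ V (inclT V n x) = ∑ a : Fin n,
      TensorProduct.map (inclT V a) (inclT V (n - 1 - a))
        (splitT a (n - 1 - a) (castT (by have := a.isLt; omega) x)) := by
  rw [Δ, inclT, DirectSum.toModule_lof]
  simp [LinearMap.sum_apply]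

theorem map_projT_Δ (i j : ℕ) (t : TCo V) :
    TensorProduct.map (projT V i) (projT V j) (Δ V t)
      = splitT i j (castT (by omega) (projT V (i + j + 1) t)) := by
  refine LinearMap.congr_fun (f := TensorProduct.map (projT V i) (projT V j) ∘ₗ Δ V)
    (g := (splitT i j).toLinearMap ∘ₗ (castT (by omega)).toLinearMap ∘ₗ projT V (i + j + 1))
    (DirectSum.linearMap_ext ℂ fun n => LinearMap.ext fun x => ?_) t
  change TensorProduct.map _ _ (Δ V (inclT V n x)) = splitT i j (castT _ (projT V _ (inclT V n x)))
  rw [Δ_inclT, map_sum]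
  by_cases hn : n = i + j + 1
  · subst hn
    rw [Finset.sum_eq_single_of_mem ⟨i, by omega⟩ (Finset.mem_univ _)
        fun a _ ha => map_projT_map_inclT_of_ne (.inl fun h => ha (Fin.ext h)) _,
      map_projT_map_inclT_of_eq rfl (by dsimp only; omega),
      map_castT_splitT rfl (by dsimp only; omega), castT_castT,
      ← LinearMap.comp_apply (projT V _), projT_comp_inclT_self, LinearMap.id_apply]
  · rw [← LinearMap.comp_apply (projT V _), projT_comp_inclT_of_ne hn, LinearMap.zero_apply,
      map_zero, map_zero]
    refine Finset.sum_eq_zero fun a _ => map_projT_map_inclT_of_ne ?_ _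
    by_cases hai : (a : ℕ) = i
    · exact .inr (by omega)
    · exact .inl hai

theorem pr_eq_comp_projT :
    pr V = (PiTensorProduct.subsingletonEquiv (R := ℂ) (s := fun _ : Fin 1 => V) 0).toLinearMap ∘ₗ
      projT V 0 := by
  refine DirectSum.linearMap_ext ℂ fun n => LinearMap.ext fun x => ?_
  change pr V (inclT V n x) = _
  rw [pr, inclT, DirectSum.toModule_lof]
  cases n with
  | zero => exact congrArg _ (LinearMap.congr_fun (projT_comp_inclT_self 0) x).symm
  | succ k => simp [DirectSum.component.of]

theorem pr_comp_comp_inclV (F : TCo V →ₗ[ℂ] TCo W) :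
    (pr W).comp (F.comp (inclV V)) =
      (PiTensorProduct.subsingletonEquiv (R := ℂ) (s := fun _ : Fin 1 => W) 0).toLinearMap ∘ₗ
        blockT F 0 0 ∘ₗ
        (PiTensorProduct.subsingletonEquiv (s := fun _ : Fin 1 => V) 0).symm.toLinearMap := by
  rw [pr_eq_comp_projT, inclV]
  rfl

theorem bijective_pr_comp_comp_inclV_iff (F : TCo V →ₗ[ℂ] TCo W) :
    Function.Bijective ((pr W).comp (F.comp (inclV V))) ↔ Function.Bijective (blockT F 0 0) := by
  rw [pr_comp_comp_inclV, LinearMap.coe_comp, LinearMap.coe_comp, LinearEquiv.coe_coe,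
    LinearEquiv.coe_coe, EquivLike.comp_bijective, EquivLike.bijective_comp]

namespace IsCoalgMap

variable {F : TCo V →ₗ[ℂ] TCo W}

theorem splitT_castT_blockT (hF : IsCoalgMap F) {i j m : ℕ} (hm : i + j + 1 = m) (n : ℕ)
    (x : Tpow V (n + 1)) :
    splitT i j (castT (by omega) (blockT F m n x)) =
      ∑ a : Fin n, TensorProduct.map (blockT F i a) (blockT F j (n - 1 - a))
        (splitT a (n - 1 - a) (castT (by have := a.isLt; omega) x)) := by
  subst hm
  rw [show blockT F _ n x = projT W _ (F (inclT V n x)) from rfl, ← map_projT_Δ,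
    ← LinearMap.comp_apply (Δ W), hF, LinearMap.comp_apply, Δ_inclT, map_sum, map_sum]
  refine Finset.sum_congr rfl fun a _ => ?_
  simp only [← LinearMap.comp_apply (TensorProduct.map _ _), ← TensorProduct.map_comp]

theorem blockT_eq_zero_of_lt (hF : IsCoalgMap F) {m n : ℕ} (h : n < m) : blockT F m n = 0 := by
  induction n using Nat.strong_induction_on generalizing m with
  | _ n ih =>
    obtain ⟨j, rfl⟩ : ∃ j, m = j + 1 := ⟨m - 1, by omega⟩
    refine LinearMap.ext fun x => ?_
    -- every summand contains a block `blockT F j b` with `b < j`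
    have hsplit := hF.splitT_castT_blockT (i := 0) (j := j) (m := j + 1) (by omega) n x
    rw [Finset.sum_eq_zero fun a _ => by
      have := a.isLt
      rw [ih (n - 1 - a) (by omega) (by omega), TensorProduct.map_zero_right,
        LinearMap.zero_apply]] at hsplit
    simpa using hsplit

theorem bijective_blockT_self (hF : IsCoalgMap F) (h₀ : Function.Bijective (blockT F 0 0)) (n : ℕ) :
    Function.Bijective (blockT F n n) := by
  induction n with
  | zero => exact h₀
  | succ k ih =>
    let e := (castT (V := W) (show k + 1 + 1 = 0 + 1 + (k + 1) by omega)).trans (splitT 0 k)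
    let e' := (castT (V := V) (show k + 1 + 1 = 0 + 1 + (k + 1) by omega)).trans (splitT 0 k)
    -- the other summands contain a block `blockT F k b` with `b < k`
    have hsplit : ⇑e ∘ blockT F (k + 1) (k + 1) =
        TensorProduct.map (blockT F 0 0) (blockT F k k) ∘ e' := by
      funext x
      refine (hF.splitT_castT_blockT (by omega) _ x).trans
        (Finset.sum_eq_single_of_mem 0 (Finset.mem_univ _) fun b _ hb => ?_)
      have hb : 0 < (b : ℕ) := Nat.pos_of_ne_zero fun h => hb (Fin.ext h)
      rw [hF.blockT_eq_zero_of_lt (m := k) (by omega), TensorProduct.map_zero_right,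
        LinearMap.zero_apply]
    rw [← EquivLike.comp_bijective _ e, hsplit, EquivLike.bijective_comp]
    exact TensorProduct.map_bijective h₀ ih

end IsCoalgMap

/-- A coalgebra endomorphism of the reduced tensor coalgebra `T V` whose first
component `V → V` is an isomorphism is itself an isomorphism. -/
theorem coalgebra_endomorphism_bijective_of_first_component_bijective
    {V : Type} [AddCommGroup V] [Module ℂ V]
    (G : TCo V →ₗ[ℂ] TCo V) (hG : IsCoalgMap G)
    (h1 : Function.Bijective ((pr V).comp (G.comp (inclV V)))) :
    Function.Bijective G := by
  have hdiag : ∀ n, Function.Bijective (blockT G n n) :=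
    hG.bijective_blockT_self ((bijective_pr_comp_comp_inclV_iff G).mp h1)
  exact DirectSum.bijective_of_upperTriangular (fun _ _ => hG.blockT_eq_zero_of_lt) hdiag
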